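/- Let p be a prime, let μ be a probability measure on SL₂(𝔽_p), and let A be a finite subset of the projective line ℙ¹(𝔽_p). Set ν = μ ∗ μ̃, where μ̃(g) = μ(g⁻¹). Then for every integer ℓ ≥ 1, ⟨1_A, ∑_{g} μ(g)·(1_A ∘ τ_g)⟩ ≤ |A|^{1 − 2^{−ℓ−1}} · ‖∑_{g} ν^{(2^{ℓ−1})}(g)·(1_A ∘ τ_g)‖₂^{2^{−ℓ}}. -/

import Mathlib

/-! Write `T_η u (x) = ∑_g η(g)·u(τ_g x)`. Since `τ` is a group action, `T_η` has adjoint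
`T_η̃` and `T_η ∘ T_ζ = T_{ζ ∗ η}`, so `‖T_η u‖² = ⟨u, T_{η ∗ η̃} u⟩ ≤ ‖u‖·‖T_{η ∗ η̃} u‖` by
Cauchy–Schwarz. Iterating the symmetrization `η ↦ η ∗ η̃` from `μ` gives `ν`, then
`ν^{(2)}, ν^{(4)}, …` (as `ν` is symmetric), and chaining the inequalities, with
`‖1_A‖ = |A|^{1/2}`, yields the bound. -/

open scoped Classical

/-- The Möbius action of `g = (a b; c d) ∈ SL₂(𝔽_p)` on the projective line
`ℙ¹(𝔽_p) = 𝔽_p ∪ {∞}`: `τ_g(x) = (a·x + b)/(c·x + d)`, with the usual conventions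
at `∞` (namely `τ_g(x) = ∞` if `c·x + d = 0`, `τ_g(∞) = a/c` if `c ≠ 0`, and
`τ_g(∞) = ∞` if `c = 0`). -/
noncomputable def tau {p : ℕ} [Fact p.Prime]
    (g : Matrix.SpecialLinearGroup (Fin 2) (ZMod p)) :
    OnePoint (ZMod p) → OnePoint (ZMod p) :=
  fun z =>
    Option.rec
      (if (g : Matrix (Fin 2) (Fin 2) (ZMod p)) 1 0 = 0 then OnePoint.infty
       else ((g 0 0 / g 1 0 : ZMod p) : OnePoint (ZMod p)))
      (fun x => if g 1 0 * x + g 1 1 = 0 then OnePoint.infty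
       else (((g 0 0 * x + g 0 1) / (g 1 0 * x + g 1 1) : ZMod p) : OnePoint (ZMod p)))
      z

/-- Convolution of two real functions on a finite group:
`(f₁ ∗ f₂)(x) = ∑_h f₁(h)·f₂(h⁻¹x)`. -/
noncomputable def conv {G : Type*} [Group G] [Fintype G] (f₁ f₂ : G → ℝ) : G → ℝ :=
  fun x => ∑ h, f₁ h * f₂ (h⁻¹ * x)

/-- The `ℓ`-fold convolution `f^{(ℓ)}` of `f` with itself (with `f^{(0)}` the point
mass at the identity, so that `f^{(1)} = f`). -/
noncomputable def iterConv {G : Type*} [Group G] [Fintype G] (f : G → ℝ) : ℕ → G → ℝ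
  | 0 => fun x => if x = 1 then 1 else 0
  | n + 1 => conv (iterConv f n) f

/-- The inner product `⟨u, v⟩ = ∑_x u(x)·v(x)` of two real functions on a finite type. -/
noncomputable def inner2 {X : Type*} [Fintype X] (u v : X → ℝ) : ℝ :=
  ∑ x, u x * v x

/-- `‖u‖₂ = ⟨u, u⟩^{1/2}`. -/
noncomputable def l2Norm {X : Type*} [Fintype X] (u : X → ℝ) : ℝ :=
  Real.sqrt (inner2 u u)

/-- The indicator function `1_A` of a finite set `A`, with real values. -/
noncomputable def indic {X : Type*} (A : Finset X) : X → ℝ :=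
  fun x => if x ∈ A then 1 else 0

/-- `η` is a probability measure on the finite group `G`: it is nonnegative and sums to 1. -/
def IsProbMeasure {G : Type*} [Group G] [Fintype G] (η : G → ℝ) : Prop :=
  (∀ g, 0 ≤ η g) ∧ ∑ g, η g = 1

section Convolution

variable {G : Type*} [Group G] [Fintype G]

lemma conv_assoc (f₁ f₂ f₃ : G → ℝ) : conv (conv f₁ f₂) f₃ = conv f₁ (conv f₂ f₃) := by
  funext x
  simp only [conv, Finset.sum_mul, Finset.mul_sum]
  rw [Finset.sum_comm]
  refine Finset.sum_congr rfl fun h _ => ?_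
  exact Fintype.sum_equiv (Equiv.mulLeft h⁻¹) _ _ fun k => by simp [mul_assoc]

lemma iterConv_zero_conv (f g : G → ℝ) : conv (iterConv f 0) g = g := by
  funext x
  rw [conv, Finset.sum_eq_single 1] <;> simp +contextual [iterConv]

lemma conv_iterConv_zero (f g : G → ℝ) : conv g (iterConv f 0) = g := by
  funext x
  rw [conv, Finset.sum_eq_single x] <;> simp +contextual [iterConv, inv_mul_eq_one, eq_comm]

lemma iterConv_one (f : G → ℝ) : iterConv f 1 = f :=
  iterConv_zero_conv f f

lemma iterConv_add (f : G → ℝ) (m n : ℕ) :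
    iterConv f (m + n) = conv (iterConv f m) (iterConv f n) := by
  induction n with
  | zero => rw [Nat.add_zero, conv_iterConv_zero]
  | succ n ih => rw [← Nat.add_assoc, iterConv, ih, conv_assoc, ← iterConv]

lemma conv_apply_inv (f₁ f₂ : G → ℝ) (x : G) :
    conv f₁ f₂ x⁻¹ = conv (fun g => f₂ g⁻¹) (fun g => f₁ g⁻¹) x := by
  refine Fintype.sum_equiv (Equiv.mulLeft x) _ _ fun h => ?_
  simp [mul_comm]

lemma iterConv_apply_inv {f : G → ℝ} (hf : ∀ g, f g⁻¹ = f g) (n : ℕ) (x : G) :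
    iterConv f n x⁻¹ = iterConv f n x := by
  induction n generalizing x with
  | zero => simp [iterConv]
  | succ n ih =>
    have hcomm := iterConv_add f 1 n
    rw [iterConv_one, Nat.add_comm] at hcomm
    rw [iterConv, conv_apply_inv, funext hf, funext ih, ← hcomm]
    rfl

noncomputable def symmIter (η : G → ℝ) : ℕ → G → ℝ
  | 0 => η
  | j + 1 => conv (symmIter η j) fun g => symmIter η j g⁻¹

lemma symmIter_succ (η : G → ℝ) (j : ℕ) :
    symmIter η (j + 1) = iterConv (conv η fun g => η g⁻¹) (2 ^ j) := by
  induction j with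
  | zero => rw [pow_zero, iterConv_one]; rfl
  | succ j ih =>
    have hsymm (g : G) : conv η (fun g => η g⁻¹) g⁻¹ = conv η (fun g => η g⁻¹) g := by
      simp [conv_apply_inv]
    rw [symmIter, ih, funext (iterConv_apply_inv hsymm _), ← iterConv_add, pow_succ, mul_two]

end Convolution

section L2

variable {X : Type*} [Fintype X]

lemma l2Norm_nonneg (u : X → ℝ) : 0 ≤ l2Norm u :=
  Real.sqrt_nonneg _

lemma inner2_le_l2Norm_mul_l2Norm (u v : X → ℝ) : inner2 u v ≤ l2Norm u * l2Norm v := by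
  simpa only [l2Norm, inner2, sq] using Real.sum_mul_le_sqrt_mul_sqrt Finset.univ u v

lemma l2Norm_indic (A : Finset X) : l2Norm (indic A) = Real.sqrt A.card := by
  simp [l2Norm, inner2, indic]

end L2

lemma le_rpow_mul_rpow_of_sq_le_mul_succ {b : ℝ} (hb : 0 ≤ b) {n : ℕ → ℝ} (hn : ∀ j, 0 ≤ n j)
    (hstep : ∀ j, n j ^ 2 ≤ b * n (j + 1)) (j : ℕ) :
    n 0 ≤ b ^ (1 - (2⁻¹ : ℝ) ^ j) * n j ^ ((2⁻¹ : ℝ) ^ j) := by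
  induction j with
  | zero => simp
  | succ j ih =>
    set e : ℝ := (2⁻¹ : ℝ) ^ j
    have he : e ≤ 1 := pow_le_one₀ (by norm_num) (by norm_num)
    have hroot : n j ^ e ≤ b ^ (e / 2) * n (j + 1) ^ (e / 2) := calc
      n j ^ e = (n j ^ 2) ^ (e / 2) := by
        rw [← Real.rpow_natCast_mul (hn j)]; push_cast; ring_nf
      _ ≤ (b * n (j + 1)) ^ (e / 2) := by gcongr; exact hstep j
      _ = b ^ (e / 2) * n (j + 1) ^ (e / 2) := Real.mul_rpow hb (hn _)
    calc n 0 ≤ b ^ (1 - e) * n j ^ e := ih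
      _ ≤ b ^ (1 - e) * (b ^ (e / 2) * n (j + 1) ^ (e / 2)) := by gcongr
      _ = b ^ (1 - e / 2) * n (j + 1) ^ (e / 2) := by
        rw [← mul_assoc, ← Real.rpow_add' hb (by linarith)]; ring_nf
      _ = _ := by rw [pow_succ, div_eq_mul_inv]

lemma two_rpow_neg_natCast (n : ℕ) : (2 : ℝ) ^ (-(n : ℝ)) = (2⁻¹ : ℝ) ^ n := by
  rw [Real.rpow_neg zero_le_two, Real.rpow_natCast, inv_pow]

section Averaging

variable {G X : Type*} [Group G] [Fintype G] [MulAction G X]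

noncomputable def avgOp (η : G → ℝ) (u : X → ℝ) : X → ℝ :=
  fun x => ∑ g, η g * u (g • x)

lemma avgOp_avgOp (η ζ : G → ℝ) (u : X → ℝ) :
    avgOp η (avgOp ζ u) = avgOp (conv ζ η) u := by
  funext x
  simp only [avgOp, conv, Finset.mul_sum, Finset.sum_mul, smul_smul]
  rw [Finset.sum_comm, Finset.sum_comm (f := fun k h => ζ h * η (h⁻¹ * k) * u (k • x))]
  refine Finset.sum_congr rfl fun h _ => ?_
  refine Fintype.sum_equiv (Equiv.mulLeft h) _ _ fun g => ?_
  simp only [Equiv.coe_mulLeft, inv_mul_cancel_left]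
  ring

variable [Fintype X]

lemma inner2_avgOp_left (η : G → ℝ) (u v : X → ℝ) :
    inner2 (avgOp η u) v = inner2 u (avgOp (fun g => η g⁻¹) v) := by
  simp only [inner2, avgOp, Finset.sum_mul, Finset.mul_sum]
  rw [Finset.sum_comm, Finset.sum_comm (f := fun y g => u y * (η g⁻¹ * v (g • y)))]
  refine Fintype.sum_equiv (Equiv.inv G) _ _ fun g => ?_
  refine Fintype.sum_equiv (MulAction.toPerm g) _ _ fun x => ?_
  simp only [MulAction.toPerm_apply, Equiv.inv_apply, inv_inv, inv_smul_smul]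
  ring

lemma l2Norm_avgOp_sq_le (η : G → ℝ) (u : X → ℝ) :
    l2Norm (avgOp η u) ^ 2 ≤ l2Norm u * l2Norm (avgOp (conv η fun g => η g⁻¹) u) := by
  have hpos : 0 ≤ inner2 (avgOp η u) (avgOp η u) :=
    Finset.sum_nonneg fun x _ => mul_self_nonneg _
  rw [l2Norm, Real.sq_sqrt hpos, inner2_avgOp_left, avgOp_avgOp]
  exact inner2_le_l2Norm_mul_l2Norm _ _

theorem inner2_avgOp_le (η : G → ℝ) (u : X → ℝ) (j : ℕ) :
    inner2 u (avgOp η u) ≤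
      l2Norm u ^ (2 - (2⁻¹ : ℝ) ^ j) * l2Norm (avgOp (symmIter η j) u) ^ ((2⁻¹ : ℝ) ^ j) := by
  have hiter := le_rpow_mul_rpow_of_sq_le_mul_succ (l2Norm_nonneg u)
    (fun j => l2Norm_nonneg (avgOp (symmIter η j) u)) (fun j => l2Norm_avgOp_sq_le _ u) j
  have he : (2⁻¹ : ℝ) ^ j ≤ 1 := pow_le_one₀ (by norm_num) (by norm_num)
  calc inner2 u (avgOp η u) ≤ l2Norm u * l2Norm (avgOp η u) := inner2_le_l2Norm_mul_l2Norm _ _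
    _ ≤ l2Norm u * (l2Norm u ^ (1 - (2⁻¹ : ℝ) ^ j) *
          l2Norm (avgOp (symmIter η j) u) ^ ((2⁻¹ : ℝ) ^ j)) := by
      gcongr
      · exact l2Norm_nonneg u
      · exact hiter
    _ = _ := by
      rw [← mul_assoc, ← Real.rpow_one_add' (l2Norm_nonneg u) (by linarith)]; ring_nf

end Averaging

noncomputable instance {p : ℕ} [Fact p.Prime] :
    MulAction (Matrix.SpecialLinearGroup (Fin 2) (ZMod p)) (OnePoint (ZMod p)) :=
  MulAction.compHom _ Matrix.SpecialLinearGroup.toGL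

lemma tau_eq_smul {p : ℕ} [Fact p.Prime] (g : Matrix.SpecialLinearGroup (Fin 2) (ZMod p))
    (x : OnePoint (ZMod p)) : tau g x = g • x := by
  change _ = Matrix.SpecialLinearGroup.toGL g • x
  cases x with
  | infty => rw [OnePoint.smul_infty_eq_ite]; rfl
  | coe x => rw [OnePoint.smul_some_eq_ite]; rfl

theorem iterated_cauchy_schwarz_step_general
    (p : ℕ) [Fact p.Prime]
    (μ : Matrix.SpecialLinearGroup (Fin 2) (ZMod p) → ℝ)
    (A : Finset (OnePoint (ZMod p)))
    (ℓ : ℕ) (hℓ : 1 ≤ ℓ) :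
    inner2 (indic A) (fun x => ∑ g, μ g * indic A (tau g x))
      ≤ (A.card : ℝ) ^ (1 - (2 : ℝ) ^ (-(ℓ : ℝ) - 1)) *
        l2Norm (fun x => ∑ g,
            iterConv (conv μ (fun h => μ h⁻¹)) (2 ^ (ℓ - 1)) g * indic A (tau g x))
          ^ ((2 : ℝ) ^ (-(ℓ : ℝ))) := by
  obtain ⟨k, rfl⟩ := Nat.exists_eq_add_of_le' hℓ
  have havg (η) : (fun x => ∑ g, η g * indic A (tau g x)) = avgOp η (indic A) := by
    simp only [tau_eq_smul]; rfl
  have hexp : -((k + 1 : ℕ) : ℝ) - 1 = -((k + 2 : ℕ) : ℝ) := by push_cast; ring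
  rw [havg, havg, Nat.add_sub_cancel, ← symmIter_succ, hexp, two_rpow_neg_natCast,
    two_rpow_neg_natCast]
  refine (inner2_avgOp_le μ (indic A) (k + 1)).trans_eq ?_
  rw [l2Norm_indic, Real.sqrt_eq_rpow, ← Real.rpow_mul (Nat.cast_nonneg _)]
  ring_nf

/-- Iterated Cauchy–Schwarz: for a probability measure `μ` on `SL₂(𝔽_p)`,
`ν = μ ∗ μ̃`, a finite set `A ⊆ ℙ¹(𝔽_p)` and every integer `ℓ ≥ 1`,
`⟨1_A, ∑_g μ(g)·(1_A ∘ τ_g)⟩ ≤ |A|^{1 − 2^{−ℓ−1}} · ‖∑_g ν^{(2^{ℓ−1})}(g)·(1_A ∘ τ_g)‖₂^{2^{−ℓ}}`. -/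
theorem iterated_cauchy_schwarz_step
    (p : ℕ) [Fact p.Prime]
    (μ : Matrix.SpecialLinearGroup (Fin 2) (ZMod p) → ℝ)
    (hμ : IsProbMeasure μ)
    (A : Finset (OnePoint (ZMod p)))
    (ℓ : ℕ) (hℓ : 1 ≤ ℓ) :
    inner2 (indic A) (fun x => ∑ g, μ g * indic A (tau g x))
      ≤ (A.card : ℝ) ^ (1 - (2 : ℝ) ^ (-(ℓ : ℝ) - 1)) *
        l2Norm (fun x => ∑ g,
            iterConv (conv μ (fun h => μ h⁻¹)) (2 ^ (ℓ - 1)) g * indic A (tau g x))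
          ^ ((2 : ℝ) ^ (-(ℓ : ℝ))) :=
  iterated_cauchy_schwarz_step_general p μ A ℓ hℓ
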